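/- Let R be a d-dimensional cube of side length M·s tessellated into M^d identical subcubes of side s, and let an ordering of the subcubes be given such that any two consecutive subcubes are axis-neighbours (their centre vectors differ by exactly s in exactly one coordinate), as is the case for the M-ary Gray curve ordering. Let γ be the piecewise linear curve passing through the centres of the subcubes in this order. Then there is a constant c_d > 0, depending only on d, such that for any two subcubes that are not consecutive in the ordering and any points x1, x2 of γ lying in these two subcubes respectively, dist(x1, x2) ≥ c_d·s, where dist is the max-norm distance. -/

import Mathlib

/-!
Rescale by `x ↦ (x - a) / s - 1/2`, which turns subcube centres into lattice points and divides
distances by `s`. A point `u` of the edge joining axis-neighbouring lattice points `v` and `w`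
agrees with `v = w` in every coordinate but one and lies between `v k` and `w k` in the remaining
coordinate `k`, so every lattice point at sup-distance `< 1` from `u` is `v` or `w`.

If `x₁` on the edge `[ord p, ord (p+1)]` lies in the subcube `ord i₁`, `x₂` lies in the
subcube `ord i₂` and `dist x₁ x₂ < s / 2`, then both centres are at distance `< s` from `x₁`.
Hence `i₁, i₂ ∈ {p, p+1}`, and the subcubes are equal or consecutive. So `c_d = 1/2` works.
-/

open Set

noncomputable section

/-- The centre of the subcube with index vector `v ∈ {0, …, M-1}^d` of the tessellation of
the cube with corner `a` into subcubes of side `s`. -/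
def subcubeCentre {d : ℕ} (a : Fin d → ℝ) (s : ℝ) (v : Fin d → ℕ) : Fin d → ℝ :=
  fun k => a k + ((v k : ℝ) + 1 / 2) * s

section Lattice

variable {ι : Type*}

def latticePoint (v : ι → ℕ) : ι → ℝ := fun k => v k

def IsAxisNeighbour (v w : ι → ℕ) : Prop :=
  ∃ k, (v k + 1 = w k ∨ w k + 1 = v k) ∧ ∀ k' ≠ k, v k' = w k'

theorem mem_uIcc_of_dist_natCast_lt_one {a b c : ℕ} {u : ℝ} (hu : u ∈ uIcc (a : ℝ) b)
    (hc : dist u (c : ℝ) < 1) : c ∈ uIcc a b := by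
  rw [Real.dist_eq, abs_lt] at hc
  have between : ∀ {m n : ℕ}, (m : ℝ) ≤ u → u ≤ n → m ≤ c ∧ c ≤ n := fun {m n} hm hn => by
    have hmc : (m : ℝ) < c + 1 := by linarith
    have hcn : (c : ℝ) < n + 1 := by linarith
    exact ⟨Nat.lt_add_one_iff.1 (mod_cast hmc), Nat.lt_add_one_iff.1 (mod_cast hcn)⟩
  rw [mem_uIcc] at hu ⊢
  exact hu.imp (fun h => between h.1 h.2) (fun h => between h.1 h.2)

theorem mem_uIcc_of_mem_segment_of_dist_lt_one [Fintype ι] {v w z : ι → ℕ} {u : ι → ℝ}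
    (hu : u ∈ segment ℝ (latticePoint v) (latticePoint w)) (hz : dist u (latticePoint z) < 1) :
    z ∈ uIcc v w := by
  rw [← pi_univ_uIcc]
  intro i _
  show z i ∈ uIcc (v i) (w i)
  refine mem_uIcc_of_dist_natCast_lt_one ?_ ((dist_le_pi_dist _ _ i).trans_lt hz)
  rw [← segment_eq_uIcc]
  exact Pi.segment_subset (s := univ) _ _ hu i trivial

theorem IsAxisNeighbour.eq_or_eq_of_mem_uIcc {v w z : ι → ℕ} (h : IsAxisNeighbour v w)
    (hz : z ∈ uIcc v w) : z = v ∨ z = w := by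
  obtain ⟨k, hk, hother⟩ := h
  have hcoord : ∀ i, z i ∈ uIcc (v i) (w i) := fun i => ⟨hz.1 i, hz.2 i⟩
  have hz_other : ∀ i ≠ k, z i = v i := fun i hi => by
    simpa only [hother i hi, uIcc_self, mem_singleton_iff] using hcoord i
  have hz_k : z k = v k ∨ z k = w k := by
    have := hcoord k
    rw [mem_uIcc] at this
    omega
  refine hz_k.imp (fun hv => funext fun i => ?_) (fun hw => funext fun i => ?_)
  · rcases eq_or_ne i k with rfl | hi
    exacts [hv, hz_other i hi]
  · rcases eq_or_ne i k with rfl | hi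
    exacts [hw, (hz_other i hi).trans (hother i hi)]

def latticeCoords (a : ι → ℝ) (s : ℝ) (x : ι → ℝ) : ι → ℝ :=
  s⁻¹ • (x - a) - fun _ => 1 / 2

theorem latticeCoords_mem_segment (a : ι → ℝ) (s : ℝ) {x y z : ι → ℝ}
    (hx : x ∈ segment ℝ y z) :
    latticeCoords a s x ∈ segment ℝ (latticeCoords a s y) (latticeCoords a s z) := by
  obtain ⟨α, β, hα, hβ, hαβ, rfl⟩ := hx
  refine ⟨α, β, hα, hβ, hαβ, funext fun k => ?_⟩
  simp only [latticeCoords, Pi.add_apply, Pi.sub_apply, Pi.smul_apply, smul_eq_mul]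
  linear_combination (-(s⁻¹ * a k) - 1 / 2) * hαβ

theorem dist_latticeCoords [Fintype ι] {a : ι → ℝ} {s : ℝ} (hs : 0 < s) (x y : ι → ℝ) :
    dist (latticeCoords a s x) (latticeCoords a s y) = dist x y / s := by
  rw [latticeCoords, latticeCoords, dist_sub_right, dist_smul₀, dist_sub_right,
    Real.norm_eq_abs, abs_inv, abs_of_pos hs, inv_mul_eq_div]

end Lattice

theorem latticeCoords_subcubeCentre {d : ℕ} {a : Fin d → ℝ} {s : ℝ} (hs : s ≠ 0)
    (v : Fin d → ℕ) : latticeCoords a s (subcubeCentre a s v) = latticePoint v := by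
  funext k
  simp only [latticeCoords, subcubeCentre, latticePoint, Pi.sub_apply, Pi.smul_apply,
    smul_eq_mul]
  field_simp
  ring

theorem IsAxisNeighbour.eq_or_eq_of_dist_subcubeCentre_lt {d : ℕ} {v w z : Fin d → ℕ}
    (h : IsAxisNeighbour v w) {a x : Fin d → ℝ} {s : ℝ} (hs : 0 < s)
    (hx : x ∈ segment ℝ (subcubeCentre a s v) (subcubeCentre a s w))
    (hz : dist x (subcubeCentre a s z) < s) : z = v ∨ z = w := by
  refine h.eq_or_eq_of_mem_uIcc
    (mem_uIcc_of_mem_segment_of_dist_lt_one (u := latticeCoords a s x) ?_ ?_)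
  · simpa only [latticeCoords_subcubeCentre hs.ne'] using latticeCoords_mem_segment a s hx
  · rwa [← latticeCoords_subcubeCentre hs.ne', dist_latticeCoords hs, div_lt_one hs]

theorem statement_17_general (d : ℕ) :
    ∃ cd : ℝ, 0 < cd ∧
      ∀ (M : ℕ), 1 ≤ M → ∀ (s : ℝ), 0 < s → ∀ (a : Fin d → ℝ) (ord : ℕ → Fin d → ℕ),
        -- `ord` maps `{0, …, M^d - 1}` into the index vectors
        (∀ t, t < M ^ d → ∀ k, ord t k < M) →
        -- injectivity
        (∀ t1 t2, t1 < M ^ d → t2 < M ^ d → ord t1 = ord t2 → t1 = t2) →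
        -- surjectivity
        (∀ v : Fin d → ℕ, (∀ k, v k < M) → ∃ t < M ^ d, ord t = v) →
        -- consecutive subcubes are axis-neighbours: they differ in exactly one coordinate,
        -- and there by exactly one
        (∀ t, t + 1 < M ^ d → ∃ k : Fin d,
          (ord t k + 1 = ord (t + 1) k ∨ ord (t + 1) k + 1 = ord t k) ∧
          ∀ k' : Fin d, k' ≠ k → ord t k' = ord (t + 1) k') →
        ∀ (p q i1 i2 : ℕ), p + 1 < M ^ d → q + 1 < M ^ d → i1 < M ^ d → i2 < M ^ d →
          -- the subcubes `ord i1` and `ord i2` are not consecutive in the ordering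
          (i1 + 2 ≤ i2 ∨ i2 + 2 ≤ i1) →
          ∀ x1 x2 : Fin d → ℝ,
            -- `x1` and `x2` are points of the curve `γ`
            x1 ∈ segment ℝ (subcubeCentre a s (ord p)) (subcubeCentre a s (ord (p + 1))) →
            x2 ∈ segment ℝ (subcubeCentre a s (ord q)) (subcubeCentre a s (ord (q + 1))) →
            -- `x1` lies in the subcube `ord i1` and `x2` in the subcube `ord i2`
            (∀ k, |x1 k - subcubeCentre a s (ord i1) k| ≤ s / 2) →
            (∀ k, |x2 k - subcubeCentre a s (ord i2) k| ≤ s / 2) →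
            cd * s ≤ dist x1 x2 := by
  refine ⟨1 / 2, one_half_pos, ?_⟩
  intro M _ s hs a ord _ hinj _ hnb p _ i1 i2 hp _ hi1 hi2 hsep x1 x2 hx1 _ hc1 hc2
  by_contra! hclose
  set c := fun i => subcubeCentre a s (ord i)
  have hdist : ∀ {x : Fin d → ℝ} {i : ℕ}, (∀ k, |x k - c i k| ≤ s / 2) → dist x (c i) ≤ s / 2 :=
    fun hc => (dist_pi_le_iff (by positivity)).2 fun k => (Real.dist_eq _ _).trans_le (hc k)
  have hedge : ∀ i < M ^ d, dist x1 (c i) < s → i = p ∨ i = p + 1 := fun i hi hlt =>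
    (IsAxisNeighbour.eq_or_eq_of_dist_subcubeCentre_lt (hnb p hp) hs hx1 hlt).imp
      (hinj i p hi (by omega)) (hinj i (p + 1) hi hp)
  have h1 := hedge i1 hi1 (by linarith [hdist hc1])
  have h2 := hedge i2 hi2 (by linarith [hdist hc2, dist_triangle x1 x2 (c i2)])
  omega

/-- Let a cube of side `M * s` be tessellated into `M^d` subcubes of side
`s`, and let an ordering `ord` of the subcubes be given (a bijection from `{0, …, M^d - 1}`
to the index vectors) such that consecutive subcubes are axis-neighbours, as for the M-ary
Gray curve.  Let `γ` be the piecewise linear curve through the centres of the subcubes in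
this order.  Then there is a constant `c_d > 0` depending only on `d` such that any two
points of `γ` lying in two subcubes that are not consecutive in the ordering are at max-norm
distance at least `c_d * s` from each other.  (Here `dist` on `Fin d → ℝ` is the sup-metric,
i.e. the max-norm distance, points of `γ` are parametrized as points of the segments joining
consecutive centres, and a point lies in the subcube `v` if each of its coordinates is within
`s / 2` of the centre of `v`.) -/
theorem statement_17 (d : ℕ) (hd : 1 ≤ d) :
    ∃ cd : ℝ, 0 < cd ∧
      ∀ (M : ℕ), 1 ≤ M → ∀ (s : ℝ), 0 < s → ∀ (a : Fin d → ℝ) (ord : ℕ → Fin d → ℕ),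
        -- `ord` maps `{0, …, M^d - 1}` into the index vectors
        (∀ t, t < M ^ d → ∀ k, ord t k < M) →
        -- injectivity
        (∀ t1 t2, t1 < M ^ d → t2 < M ^ d → ord t1 = ord t2 → t1 = t2) →
        -- surjectivity
        (∀ v : Fin d → ℕ, (∀ k, v k < M) → ∃ t < M ^ d, ord t = v) →
        -- consecutive subcubes are axis-neighbours: they differ in exactly one coordinate,
        -- and there by exactly one
        (∀ t, t + 1 < M ^ d → ∃ k : Fin d,
          (ord t k + 1 = ord (t + 1) k ∨ ord (t + 1) k + 1 = ord t k) ∧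
          ∀ k' : Fin d, k' ≠ k → ord t k' = ord (t + 1) k') →
        ∀ (p q i1 i2 : ℕ), p + 1 < M ^ d → q + 1 < M ^ d → i1 < M ^ d → i2 < M ^ d →
          -- the subcubes `ord i1` and `ord i2` are not consecutive in the ordering
          (i1 + 2 ≤ i2 ∨ i2 + 2 ≤ i1) →
          ∀ x1 x2 : Fin d → ℝ,
            -- `x1` and `x2` are points of the curve `γ`
            x1 ∈ segment ℝ (subcubeCentre a s (ord p)) (subcubeCentre a s (ord (p + 1))) →
            x2 ∈ segment ℝ (subcubeCentre a s (ord q)) (subcubeCentre a s (ord (q + 1))) →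
            -- `x1` lies in the subcube `ord i1` and `x2` in the subcube `ord i2`
            (∀ k, |x1 k - subcubeCentre a s (ord i1) k| ≤ s / 2) →
            (∀ k, |x2 k - subcubeCentre a s (ord i2) k| ≤ s / 2) →
            cd * s ≤ dist x1 x2 :=
  statement_17_general d

end
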